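/- Let q = p^h with p an odd prime, e ∣ h with h/e odd, and suppose a (distinct entries) and v ∈ (F_q^*)^n satisfy GRS_m(a,v,∞)^⊥ = GRS_{n+1-m}(a,v,∞) for some 1 ≤ m ≤ ⌊(n+1)/2⌋ (Euclidean duality). Then for any 1 ≤ k ≤ ⌊(p^e + n - 1)/(p^e + 1)⌋ and 0 ≤ l ≤ k - 1, there exists an [n+1, k] MDS code C over F_q with dim Hull_e(C) = l. -/

import Mathlib

/-- The extended generalized Reed–Solomon code `GRS_k(a, v, ∞)` as a set of codewords. -/
def eGRSset {F : Type*} [Field F] {n : ℕ} (a v : Fin n → F) (k : ℕ) :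
    Set (Fin (n + 1) → F) :=
  {c | ∃ f : Polynomial F, f.degree < (k : ℕ) ∧
    c = Fin.snoc (fun i => v i * f.eval (a i)) (f.coeff (k - 1))}

/-- The `e`-Galois dual relative to the inner product `⟨x, y⟩ = ∑ i, x i * (y i)^pe`. -/
def galoisDual {F : Type*} [Field F] {ι : Type*} [Fintype ι] (pe : ℕ)
    (C : Submodule F (ι → F)) : Submodule F (ι → F) where
  carrier := {x | ∀ y ∈ C, ∑ i, x i * (y i) ^ pe = 0}
  add_mem' := by
    intro x y hx hy z hz
    simp only [Pi.add_apply, add_mul, Finset.sum_add_distrib]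
    rw [hx z hz, hy z hz, add_zero]
  zero_mem' := by
    intro y _
    simp
  smul_mem' := by
    intro c x hx y hy
    simp only [Pi.smul_apply, smul_eq_mul, mul_assoc, ← Finset.mul_sum]
    rw [hx y hy, mul_zero]

/-!
Euclidean self-duality of `GRS_m(a, v, ∞)` forces `v i ^ 2 = -u i`, where
`u i = ∏_{j ≠ i} (a i - a j)⁻¹` is the nodal weight. As `h / e` is odd,
`gcd (p^e + 1, q - 1) ∣ 2`, so every nonzero square is a `(p^e + 1)`-th power and we may choose
`w` with `w i ^ (p^e + 1) = -d i * u i` for prescribed nonzero squares `d i`.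

For `C = GRS_k(a, w, ∞)` and `deg f, deg g < k` the polynomial `f * g ^ p^e` has degree at most
`(k - 1)(p^e + 1) ≤ n - 2`, so `∑ u i * (f * g ^ p^e)(a i) = 0` and the `e`-Galois form of the
codewords of `f` and `g` reduces to
`f_{k-1} g_{k-1}^{p^e} - ∑_{d i ≠ 1} (d i - 1) u i f(a i) g(a i)^{p^e}`.
Hence the hull consists of the codewords of the `f` of degree `< k - 1` vanishing at every `a i`
with `d i ≠ 1`, and has dimension `k - 1 - #{i | d i ≠ 1}`; taking `d i = γ²` with `γ² ≠ 1`
at exactly `k - 1 - l` positions gives dimension `l`.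
-/

open Polynomial Finset Module

theorem Nat.gcd_pow_add_one_pow_sub_one_dvd_two {p e h : ℕ} (hp : 0 < p) (hdvd : e ∣ h)
    (hodd : Odd (h / e)) : Nat.gcd (p ^ e + 1) (p ^ h - 1) ∣ 2 := by
  have hplus : p ^ e + 1 ∣ p ^ h + 1 := by
    rw [← Nat.mul_div_cancel' hdvd, pow_mul]
    simpa using hodd.nat_add_dvd_pow_add_pow (p ^ e) 1
  have hpos : 1 ≤ p ^ h := Nat.one_le_pow _ _ hp
  have hdiff := Nat.dvd_sub ((Nat.gcd_dvd_left _ (p ^ h - 1)).trans hplus)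
    (Nat.gcd_dvd_right (p ^ e + 1) _)
  rwa [show p ^ h + 1 - (p ^ h - 1) = 2 by omega] at hdiff

theorem exists_pow_eq_pow_of_gcd_card_dvd {G : Type*} [Group G] [Finite G] {M j : ℕ}
    (h : Nat.gcd M (Nat.card G) ∣ j) (y : G) : ∃ w : G, w ^ M = y ^ j := by
  obtain ⟨c, rfl⟩ := h
  refine ⟨y ^ (Nat.gcdA M (Nat.card G) * c), ?_⟩
  have hcard : y ^ (Nat.card G : ℤ) = 1 := by rw [zpow_natCast, pow_card_eq_one']
  rw [← zpow_natCast, ← zpow_mul, ← zpow_natCast y, Nat.cast_mul, Nat.gcd_eq_gcd_ab,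
    add_mul, zpow_add, mul_assoc (Nat.card G : ℤ), zpow_mul y (Nat.card G : ℤ), hcard, one_zpow,
    mul_one]
  ring_nf

theorem FiniteField.exists_pow_eq_pow_of_gcd_dvd {F : Type*} [Field F] [Finite F] {M j : ℕ}
    (h : Nat.gcd M (Nat.card F - 1) ∣ j) {z : F} (hz : z ≠ 0) :
    ∃ w : F, w ≠ 0 ∧ w ^ M = z ^ j := by
  rw [← Nat.card_units] at h
  obtain ⟨w, hw⟩ := exists_pow_eq_pow_of_gcd_card_dvd h (Units.mk0 z hz)
  exact ⟨w, w.ne_zero, by simpa using congrArg Units.val hw⟩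

theorem exists_ne_zero_sq_ne_one {F : Type*} [Field F] [Fintype F] [DecidableEq F]
    (hF : 3 < Fintype.card F) : ∃ γ : F, γ ≠ 0 ∧ γ ^ 2 ≠ 1 := by
  by_contra! hsq
  have hsub : (univ : Finset F) ⊆ {0, 1, -1} := by
    intro x _
    rcases eq_or_ne x 0 with rfl | hx
    · simp
    · rcases mul_self_eq_one_iff.mp (sq x ▸ hsq x hx) with rfl | rfl <;> simp
  have := (card_le_card hsub).trans (card_le_three (a := (0 : F)))
  rw [card_univ] at this
  omega

theorem exists_ne_zero_card_sq_ne_one {F : Type*} [Field F] [Fintype F] [DecidableEq F]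
    {n t : ℕ} (htn : t ≤ n) (hF : 0 < t → 3 < Fintype.card F) :
    ∃ c : Fin n → F, (∀ i, c i ≠ 0) ∧ #{i | c i ^ 2 ≠ 1} = t := by
  rcases Nat.eq_zero_or_pos t with rfl | ht
  · exact ⟨1, fun _ => one_ne_zero, by simp⟩
  obtain ⟨γ, hγ0, hγ⟩ := exists_ne_zero_sq_ne_one (hF ht)
  refine ⟨fun i => if (i : ℕ) < t then γ else 1,
    fun i => by dsimp only; split_ifs <;> simp [hγ0], ?_⟩
  have hfilter : ({i | (if (i : ℕ) < t then γ else 1) ^ 2 ≠ 1} : Finset (Fin n)) =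
      ({i | (i : ℕ) < t} : Finset (Fin n)) := by
    ext i
    simp only [mem_filter, mem_univ, true_and]
    split_ifs with hi <;> simp [hi, hγ]
  rw [hfilter, Fin.card_filter_val_lt]
  omega

theorem Nat.two_mul_le_of_sub_one_mul_add_two_le {k q n : ℕ} (hq : 0 < q)
    (h : (k - 1) * (q + 1) + 2 ≤ n) : 2 * k ≤ n := by
  have := Nat.mul_le_mul_left (k - 1) (show 2 ≤ q + 1 by omega)
  omega

theorem Polynomial.natDegree_le_pred_of_mem_degreeLT {R : Type*} [Semiring R] {f : R[X]} {k : ℕ}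
    (hf : f ∈ degreeLT R k) : f.natDegree ≤ k - 1 := by
  rcases eq_or_ne f 0 with rfl | hf0
  · simp
  · have := (natDegree_lt_iff_degree_lt hf0).2 (mem_degreeLT.1 hf)
    omega

theorem Polynomial.mem_degreeLT_of_natDegree_lt {R : Type*} [Semiring R] {f : R[X]} {N : ℕ}
    (hf : f.natDegree < N) : f ∈ degreeLT R N :=
  mem_degreeLT.2 (degree_le_natDegree.trans_lt (by exact_mod_cast hf))

theorem Polynomial.mem_degreeLT_pred_iff {R : Type*} [Semiring R] {f : R[X]} {k : ℕ} :
    f ∈ degreeLT R (k - 1) ↔ f ∈ degreeLT R k ∧ f.coeff (k - 1) = 0 := by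
  simp only [mem_degreeLT, degree_lt_iff_coeff_zero]
  constructor
  · exact fun h => ⟨fun m hm => h m (by omega), h _ le_rfl⟩
  · rintro ⟨h, h0⟩ m hm
    rcases hm.eq_or_lt with rfl | hlt
    · exact h0
    · exact h m (by omega)

theorem finrank_map_degreeLT {F V : Type*} [Field F] [AddCommGroup V] [Module F V]
    (φ : F[X] →ₗ[F] V) {N : ℕ} (hφ : ∀ f ∈ degreeLT F N, φ f = 0 → f = 0) :
    finrank F ((degreeLT F N).map φ) = N := by
  have hinj : Function.Injective (φ ∘ₗ (degreeLT F N).subtype) := by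
    rw [← LinearMap.ker_eq_bot, LinearMap.ker_eq_bot']
    exact fun f hf => Subtype.ext (hφ f f.2 hf)
  rw [← Submodule.range_subtype (degreeLT F N), ← LinearMap.range_comp,
    LinearMap.finrank_range_of_inj hinj, (degreeLTEquiv F N).finrank_eq, finrank_fin_fun]

namespace Lagrange

variable {F ι : Type*} [Field F] {s : Finset ι} {v : ι → F}

theorem sum_nodalWeight_mul_eval [DecidableEq ι] (hvs : Set.InjOn v s) {P : F[X]}
    (hP : P.degree < #s) : ∑ i ∈ s, nodalWeight s v i * P.eval (v i) = P.coeff (#s - 1) := by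
  rw [coeff_eq_sum hvs hP]
  refine sum_congr rfl fun i _ => ?_
  rw [nodalWeight, prod_inv_distrib, div_eq_mul_inv, mul_comm]

theorem nodal_dvd_of_eval_eq_zero (hvs : Set.InjOn v s) {f : F[X]}
    (hf : ∀ i ∈ s, f.eval (v i) = 0) : nodal s v ∣ f :=
  prod_dvd_of_coprime
    (fun _ hi _ hj hij => isCoprime_X_sub_C_of_isUnit_sub
      (sub_ne_zero.2 fun h => hij (hvs hi hj h)).isUnit)
    fun i hi => dvd_iff_isRoot.2 (hf i hi)

theorem mem_degreeLT_and_eval_eq_zero_iff (hvs : Set.InjOn v s) {N : ℕ} {f : F[X]} :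
    (f ∈ degreeLT F N ∧ ∀ i ∈ s, f.eval (v i) = 0) ↔
      f ∈ (degreeLT F (N - #s)).map (LinearMap.mulLeft F (nodal s v)) := by
  simp only [Submodule.mem_map, LinearMap.mulLeft_apply]
  constructor
  · rintro ⟨hf, hroots⟩
    obtain ⟨D, rfl⟩ := nodal_dvd_of_eval_eq_zero hvs hroots
    refine ⟨D, ?_, rfl⟩
    rcases eq_or_ne D 0 with rfl | hD
    · exact zero_mem _
    have hdeg := (natDegree_lt_iff_degree_lt (mul_ne_zero nodal_ne_zero hD)).2 (mem_degreeLT.1 hf)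
    rw [natDegree_mul nodal_ne_zero hD, natDegree_nodal] at hdeg
    exact mem_degreeLT_of_natDegree_lt (by omega)
  · rintro ⟨D, hD, rfl⟩
    refine ⟨?_, fun i hi => by rw [eval_mul, eval_nodal_at_node hi, zero_mul]⟩
    rcases eq_or_ne D 0 with rfl | hD0
    · simp
    have hdeg := (natDegree_lt_iff_degree_lt hD0).2 (mem_degreeLT.1 hD)
    refine mem_degreeLT_of_natDegree_lt ?_
    rw [natDegree_mul nodal_ne_zero hD0, natDegree_nodal]
    omega

end Lagrange

open Lagrange

theorem hammingNorm_snoc {M : Type*} [Zero M] [DecidableEq M] {n : ℕ} (x : Fin n → M) (y : M) :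
    hammingNorm (Fin.snoc x y : Fin (n + 1) → M) = hammingNorm x + if y = 0 then 0 else 1 := by
  simp only [hammingNorm, card_filter, Fin.sum_univ_castSucc, Fin.snoc_castSucc, Fin.snoc_last]
  split_ifs <;> simp_all

theorem card_sub_natDegree_le_hammingNorm_eval {F : Type*} [Field F] [DecidableEq F] {n : ℕ}
    {a : Fin n → F} (ha : Function.Injective a) {f : F[X]} (hf : f ≠ 0) :
    n - f.natDegree ≤ hammingNorm (fun i => f.eval (a i)) := by
  have hroots : #{i | f.eval (a i) = 0} ≤ f.natDegree := by
    rw [← card_image_of_injective _ ha]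
    refine card_le_degree_of_subset_roots fun x hx => ?_
    simp only [mem_val, mem_image, mem_filter, mem_univ, true_and] at hx
    obtain ⟨i, hi, rfl⟩ := hx
    exact (mem_roots hf).2 hi
  have hsplit := card_filter_add_card_filter_not (s := univ) (fun i => f.eval (a i) = 0)
  rw [card_univ, Fintype.card_fin] at hsplit
  simp only [hammingNorm, ne_eq]
  omega

theorem mem_galoisDual {F ι : Type*} [Field F] [Fintype ι] {pe : ℕ} {C : Submodule F (ι → F)}
    {x : ι → F} : x ∈ galoisDual pe C ↔ ∀ y ∈ C, ∑ i, x i * y i ^ pe = 0 :=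
  Iff.rfl

theorem sq_eq_neg_nodalWeight_of_dual_eGRSset {F : Type*} [Field F] {n m : ℕ} {a v : Fin n → F}
    (ha : Function.Injective a) (hm1 : 1 ≤ m) (hmn : m ≤ n)
    (hdual : {x : Fin (n + 1) → F | ∀ y ∈ eGRSset a v m, ∑ i, x i * y i = 0} =
      eGRSset a v (n + 1 - m)) (i : Fin n) :
    v i ^ 2 = -nodalWeight univ a i := by
  -- pair `∏_{j ∈ S} (X - a j)` with `∏_{j ∉ S, j ≠ i} (X - a j)`, where `i ∉ S`, `#S = m - 1`
  obtain ⟨S, hS, hScard⟩ := exists_subset_card_eq (s := univ.erase i) (n := m - 1)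
    (by rw [card_erase_of_mem (mem_univ i), card_univ, Fintype.card_fin]; omega)
  have hSc : #(univ.erase i \ S) = n - m := by
    rw [card_sdiff_of_subset hS, card_erase_of_mem (mem_univ i), card_univ, Fintype.card_fin,
      hScard]
    omega
  have hlead : ∀ s : Finset (Fin n), (nodal s a).coeff #s = 1 := fun s => by
    simpa [natDegree_nodal] using (nodal_monic (s := s) (v := a)).coeff_natDegree
  have hy : (Fin.snoc (fun j => v j * (nodal S a).eval (a j)) 1 : Fin (n + 1) → F) ∈
      eGRSset a v m :=
    ⟨nodal S a, by rw [degree_nodal, hScard]; exact_mod_cast (by omega),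
      by rw [← hlead S, hScard]⟩
  have hx : (Fin.snoc (fun j => v j * (nodal (univ.erase i \ S) a).eval (a j)) 1 :
      Fin (n + 1) → F) ∈ eGRSset a v (n + 1 - m) :=
    ⟨nodal (univ.erase i \ S) a, by rw [degree_nodal, hSc]; exact_mod_cast (by omega),
      by rw [← hlead, hSc, show n + 1 - m - 1 = n - m by omega]⟩
  rw [← hdual] at hx
  have horth := hx _ hy
  have hprod : ∀ j, (nodal (univ.erase i \ S) a).eval (a j) * (nodal S a).eval (a j) =
      (nodal (univ.erase i) a).eval (a j) := fun j => by
    rw [← eval_mul, nodal, nodal, nodal, prod_sdiff hS]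
  rw [Fin.sum_univ_castSucc, sum_eq_single i] at horth
  · have hnode : (nodal (univ.erase i) a).eval (a i) ≠ 0 :=
      eval_nodal_not_at_node fun j hj => ha.ne (ne_of_mem_erase hj).symm
    simp only [Fin.snoc_castSucc, Fin.snoc_last] at horth
    rw [nodalWeight_eq_eval_nodal_erase_inv]
    field_simp
    linear_combination horth - (v i ^ 2) * (hprod i)
  · intro j _ hji
    simp only [Fin.snoc_castSucc]
    rw [mul_mul_mul_comm, hprod, eval_nodal_at_node (mem_erase.2 ⟨hji, mem_univ j⟩), mul_zero]
  · simp

section eGRS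

variable {F : Type*} [Field F] {n : ℕ} (a w : Fin n → F) (k : ℕ)

noncomputable def eGRSMap : F[X] →ₗ[F] (Fin (n + 1) → F) where
  toFun f := Fin.snoc (fun i => w i * f.eval (a i)) (f.coeff (k - 1))
  map_add' f g := by
    ext i
    refine Fin.lastCases ?_ (fun i => ?_) i <;> simp [mul_add]
  map_smul' c f := by
    ext i
    refine Fin.lastCases ?_ (fun i => ?_) i <;> simp [mul_left_comm]

noncomputable def eGRS : Submodule F (Fin (n + 1) → F) := (degreeLT F k).map (eGRSMap a w k)

variable {a w k} {pe : ℕ} {d : Fin n → F}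

@[simp]
theorem eGRSMap_castSucc (f : F[X]) (i : Fin n) :
    eGRSMap a w k f i.castSucc = w i * f.eval (a i) := by
  simp [eGRSMap]

@[simp]
theorem eGRSMap_last (f : F[X]) : eGRSMap a w k f (Fin.last n) = f.coeff (k - 1) := by
  simp [eGRSMap]

theorem eq_zero_of_eGRSMap_eq_zero (ha : Function.Injective a) (hw : ∀ i, w i ≠ 0)
    (hk : k ≤ n) {f : F[X]} (hf : f ∈ degreeLT F k) (h : eGRSMap a w k f = 0) : f = 0 := by
  refine eq_zero_of_degree_lt_of_eval_index_eq_zero ha.injOn (s := univ) ?_ fun i _ => ?_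
  · rw [card_univ, Fintype.card_fin]
    exact (mem_degreeLT.1 hf).trans_le (by exact_mod_cast hk)
  · simpa [hw i] using congrFun h i.castSucc

theorem finrank_eGRS (ha : Function.Injective a) (hw : ∀ i, w i ≠ 0) (hk : k ≤ n) :
    finrank F (eGRS a w k) = k :=
  finrank_map_degreeLT _ fun _ hf => eq_zero_of_eGRSMap_eq_zero ha hw hk hf

theorem le_hammingNorm_eGRSMap [DecidableEq F] (ha : Function.Injective a) (hw : ∀ i, w i ≠ 0)
    (hk : k ≤ n) {f : F[X]} (hf : f ∈ degreeLT F k) (hf0 : f ≠ 0) :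
    n - k + 2 ≤ hammingNorm (eGRSMap a w k f) := by
  have hsnoc : eGRSMap a w k f = Fin.snoc (fun i => w i * f.eval (a i)) (f.coeff (k - 1)) := rfl
  have hscale :
      hammingNorm (fun i => w i * f.eval (a i)) = hammingNorm (fun i => f.eval (a i)) := by
    simp [hammingNorm, hw]
  have heval := card_sub_natDegree_le_hammingNorm_eval ha hf0
  have hdeg := natDegree_le_pred_of_mem_degreeLT hf
  have hk0 : k ≠ 0 := by
    rintro rfl
    exact hf0 (by simpa [mem_degreeLT] using hf)
  rw [hsnoc, hammingNorm_snoc, hscale]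
  split_ifs with hc
  · have : f.natDegree ≠ k - 1 := fun h =>
      hf0 (leadingCoeff_eq_zero.1 (by rwa [leadingCoeff, h]))
    omega
  · omega

theorem sum_eGRSMap_mul_pow_eGRSMap (ha : Function.Injective a)
    (hw : ∀ i, w i ^ (pe + 1) = -d i * nodalWeight univ a i) (hn : (k - 1) * (pe + 1) + 2 ≤ n)
    {f g : F[X]} (hf : f ∈ degreeLT F k) (hg : g ∈ degreeLT F k) :
    ∑ i, eGRSMap a w k f i * eGRSMap a w k g i ^ pe =
      f.coeff (k - 1) * g.coeff (k - 1) ^ pe -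
        ∑ i, (d i - 1) * nodalWeight univ a i * (f.eval (a i) * g.eval (a i) ^ pe) := by
  set H := f * g ^ pe
  have hH : H.natDegree + 2 ≤ n := by
    have hf' := natDegree_le_pred_of_mem_degreeLT hf
    have hg' := Nat.mul_le_mul_left pe (natDegree_le_pred_of_mem_degreeLT hg)
    have hmul : H.natDegree ≤ f.natDegree + pe * g.natDegree :=
      natDegree_mul_le.trans (Nat.add_le_add_left natDegree_pow_le _)
    nlinarith
  -- the weights `nodalWeight` annihilate evaluations of polynomials of degree `< n - 1`
  have hvanish : ∑ i, nodalWeight univ a i * H.eval (a i) = 0 := by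
    rw [sum_nodalWeight_mul_eval ha.injOn, card_univ, Fintype.card_fin]
    · exact coeff_eq_zero_of_natDegree_lt (by omega)
    · rw [card_univ, Fintype.card_fin]
      exact degree_le_natDegree.trans_lt (by exact_mod_cast (by omega))
  have hterm : ∀ i, w i * f.eval (a i) * (w i * g.eval (a i)) ^ pe =
      -(nodalWeight univ a i * H.eval (a i)) -
        (d i - 1) * nodalWeight univ a i * (f.eval (a i) * g.eval (a i) ^ pe) := by
    intro i
    rw [eval_mul, eval_pow]
    linear_combination (f.eval (a i) * g.eval (a i) ^ pe) * hw i
  rw [Fin.sum_univ_castSucc]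
  simp only [eGRSMap_castSucc, eGRSMap_last]
  rw [sum_congr rfl fun i _ => hterm i, sum_sub_distrib, sum_neg_distrib, hvanish]
  ring

theorem forall_coeff_mul_pow_eq_sum_iff [DecidableEq F] (ha : Function.Injective a)
    (hpe : pe ≠ 0) (hT : #{i | d i ≠ 1} < k) {f : F[X]} (hf : f ∈ degreeLT F k) :
    (∀ g ∈ degreeLT F k, f.coeff (k - 1) * g.coeff (k - 1) ^ pe =
        ∑ i, (d i - 1) * nodalWeight univ a i * (f.eval (a i) * g.eval (a i) ^ pe)) ↔
      f ∈ degreeLT F (k - 1) ∧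
        ∀ i ∈ ({i | d i ≠ 1} : Finset (Fin n)), f.eval (a i) = 0 := by
  set T : Finset (Fin n) := {i | d i ≠ 1}
  have hsum_zero : (∀ i ∈ T, f.eval (a i) = 0) → ∀ g : F[X],
      ∑ i, (d i - 1) * nodalWeight univ a i * (f.eval (a i) * g.eval (a i) ^ pe) = 0 := by
    refine fun hroots g => sum_eq_zero fun i _ => ?_
    by_cases hi : d i = 1
    · simp [hi]
    · simp [hroots i (by simpa [T] using hi)]
  refine ⟨fun h => ?_, fun ⟨hf', hroots⟩ g _ => ?_⟩
  · -- test against `∏_{j ∈ T \ {i}} (X - a j)`, of degree `< k - 1`, vanishing on `T \ {i}`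
    have hroots : ∀ i ∈ T, f.eval (a i) = 0 := by
      intro i hi
      have hdi : d i ≠ 1 := by simpa [T] using hi
      have hdeg : (nodal (T.erase i) a).natDegree < k - 1 := by
        have := card_pos.2 ⟨i, hi⟩
        rw [natDegree_nodal, card_erase_of_mem hi]
        omega
      have htest := h _ (degreeLT_mono (Nat.sub_le k 1) (mem_degreeLT_of_natDegree_lt hdeg))
      rw [coeff_eq_zero_of_natDegree_lt hdeg, zero_pow hpe, mul_zero, sum_eq_single i] at htest
      · have hnode : (nodal (T.erase i) a).eval (a i) ≠ 0 :=
          eval_nodal_not_at_node fun j hj => ha.ne (ne_of_mem_erase hj).symm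
        simpa [sub_ne_zero.2 hdi, nodalWeight_ne_zero ha.injOn (mem_univ i), hnode, hpe]
          using htest.symm
      · intro j _ hji
        by_cases hj : d j = 1
        · simp [hj]
        · rw [eval_nodal_at_node (mem_erase.2 ⟨hji, by simpa [T] using hj⟩), zero_pow hpe]
          simp
      · simp
    have hcoeff := h (X ^ (k - 1)) (mem_degreeLT_of_natDegree_lt (by rw [natDegree_X_pow]; omega))
    rw [coeff_X_pow_self, one_pow, mul_one, hsum_zero hroots] at hcoeff
    exact ⟨mem_degreeLT_pred_iff.2 ⟨hf, hcoeff⟩, hroots⟩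
  · rw [(mem_degreeLT_pred_iff.1 hf').2, zero_mul, hsum_zero hroots]

theorem eGRS_inf_galoisDual_eq [DecidableEq F] (ha : Function.Injective a) (hpe : pe ≠ 0)
    (hw : ∀ i, w i ^ (pe + 1) = -d i * nodalWeight univ a i) (hn : (k - 1) * (pe + 1) + 2 ≤ n)
    (hT : #{i | d i ≠ 1} < k) :
    eGRS a w k ⊓ galoisDual pe (eGRS a w k) =
      ((degreeLT F (k - 1 - #{i | d i ≠ 1})).map
        (LinearMap.mulLeft F (nodal {i | d i ≠ 1} a))).map (eGRSMap a w k) := by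
  ext x
  simp only [Submodule.mem_inf, mem_galoisDual, eGRS, Submodule.mem_map]
  constructor
  · rintro ⟨⟨f, hf, rfl⟩, hx⟩
    refine ⟨f, (mem_degreeLT_and_eval_eq_zero_iff ha.injOn).1
      ((forall_coeff_mul_pow_eq_sum_iff ha hpe hT hf).1 fun g hg => ?_), rfl⟩
    exact sub_eq_zero.1
      ((sum_eGRSMap_mul_pow_eGRSMap ha hw hn hf hg).symm.trans (hx _ ⟨g, hg, rfl⟩))
  · rintro ⟨f, hfT, rfl⟩
    have hf' := (mem_degreeLT_and_eval_eq_zero_iff ha.injOn).2 hfT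
    have hfk : f ∈ degreeLT F k := degreeLT_mono (Nat.sub_le k 1) hf'.1
    refine ⟨⟨f, hfk, rfl⟩, ?_⟩
    rintro _ ⟨g, hg, rfl⟩
    rw [sum_eGRSMap_mul_pow_eGRSMap ha hw hn hfk hg, sub_eq_zero]
    exact (forall_coeff_mul_pow_eq_sum_iff ha hpe hT hfk).2 hf' g hg

theorem finrank_eGRS_inf_galoisDual [DecidableEq F] (ha : Function.Injective a)
    (hw0 : ∀ i, w i ≠ 0) (hpe : pe ≠ 0)
    (hw : ∀ i, w i ^ (pe + 1) = -d i * nodalWeight univ a i)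
    (hn : (k - 1) * (pe + 1) + 2 ≤ n) (hT : #{i | d i ≠ 1} < k) :
    finrank F ↥(eGRS a w k ⊓ galoisDual pe (eGRS a w k)) = k - 1 - #{i | d i ≠ 1} := by
  have h2k := Nat.two_mul_le_of_sub_one_mul_add_two_le (Nat.pos_of_ne_zero hpe) hn
  rw [eGRS_inf_galoisDual_eq ha hpe hw hn hT, ← Submodule.map_comp]
  refine finrank_map_degreeLT _ fun D hD h0 => ?_
  have hmem := (mem_degreeLT_and_eval_eq_zero_iff ha.injOn).2 (Submodule.mem_map_of_mem hD)
  have hprod :=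
    eq_zero_of_eGRSMap_eq_zero ha hw0 (by omega) (degreeLT_mono (Nat.sub_le k 1) hmem.1) h0
  exact (mul_eq_zero.1 hprod).resolve_left nodal_ne_zero

end eGRS

theorem exists_MDS_with_galois_hull_dim_of_euclidean_dual_extended_GRS_general
    (p h e n m k l : ℕ)
    (hp : p.Prime) (hdvd : e ∣ h) (hquot : Odd (h / e))
    (F : Type*) [Field F] [Fintype F] [DecidableEq F]
    (hcard : Fintype.card F = p ^ h)
    (a v : Fin n → F) (ha : Function.Injective a) (hv : ∀ i, v i ≠ 0)
    (hm1 : 1 ≤ m) (hm2 : m ≤ (n + 1) / 2)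
    (hdual : {x : Fin (n + 1) → F | ∀ y ∈ eGRSset a v m, ∑ i, x i * y i = 0} =
      eGRSset a v (n + 1 - m))
    (hk1 : 1 ≤ k) (hk2 : k ≤ (p ^ e + n - 1) / (p ^ e + 1)) (hl : l ≤ k - 1) :
    ∃ C : Submodule F (Fin (n + 1) → F),
      Module.finrank F C = k ∧
      (∀ c ∈ C, c ≠ 0 → n - k + 2 ≤ hammingNorm c) ∧
      Module.finrank F ↥(C ⊓ galoisDual (p ^ e) C) = l := by
  have hpe : 0 < p ^ e := pow_pos hp.pos e
  have hn : (k - 1) * (p ^ e + 1) + 2 ≤ n := by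
    have := (Nat.le_div_iff_mul_le (by omega)).1 hk2
    rw [show k = k - 1 + 1 by omega, add_mul] at this
    omega
  have h2k := Nat.two_mul_le_of_sub_one_mul_add_two_le hpe hn
  have hnF : n ≤ Fintype.card F := by simpa using Fintype.card_le_of_injective a ha
  obtain ⟨c, hc0, hcT⟩ := exists_ne_zero_card_sq_ne_one (F := F) (n := n) (t := k - 1 - l)
    (by omega) fun _ => by omega
  have hgcd : Nat.gcd (p ^ e + 1) (Nat.card F - 1) ∣ 2 := by
    rw [Nat.card_eq_fintype_card, hcard]
    exact Nat.gcd_pow_add_one_pow_sub_one_dvd_two hp.pos hdvd hquot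
  choose w hw0 hw using fun i =>
    FiniteField.exists_pow_eq_pow_of_gcd_dvd hgcd (mul_ne_zero (hc0 i) (hv i))
  have hvsq := sq_eq_neg_nodalWeight_of_dual_eGRSset ha hm1 (by omega) hdual
  have hwd : ∀ i, w i ^ (p ^ e + 1) = -(c i ^ 2) * nodalWeight univ a i := fun i => by
    rw [hw, mul_pow, hvsq, neg_mul, mul_neg]
  refine ⟨eGRS a w k, finrank_eGRS ha hw0 (by omega), ?_, ?_⟩
  · rintro _ ⟨f, hf, rfl⟩ hne
    exact le_hammingNorm_eGRSMap ha hw0 (by omega) hf fun hf0 => hne (by rw [hf0, map_zero])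
  · rw [finrank_eGRS_inf_galoisDual ha hw0 hpe.ne' hwd hn (by omega), hcT]
    omega

theorem exists_MDS_with_galois_hull_dim_of_euclidean_dual_extended_GRS
    (p h e n m k l : ℕ)
    (hp : p.Prime) (hpodd : Odd p) (he : 0 < e) (hdvd : e ∣ h) (hquot : Odd (h / e))
    (F : Type*) [Field F] [Fintype F] [DecidableEq F] [CharP F p]
    (hcard : Fintype.card F = p ^ h)
    (a v : Fin n → F) (ha : Function.Injective a) (hv : ∀ i, v i ≠ 0)
    (hm1 : 1 ≤ m) (hm2 : m ≤ (n + 1) / 2)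
    (hdual : {x : Fin (n + 1) → F | ∀ y ∈ eGRSset a v m, ∑ i, x i * y i = 0} =
      eGRSset a v (n + 1 - m))
    (hk1 : 1 ≤ k) (hk2 : k ≤ (p ^ e + n - 1) / (p ^ e + 1)) (hl : l ≤ k - 1) :
    ∃ C : Submodule F (Fin (n + 1) → F),
      Module.finrank F C = k ∧
      (∀ c ∈ C, c ≠ 0 → n - k + 2 ≤ hammingNorm c) ∧
      Module.finrank F ↥(C ⊓ galoisDual (p ^ e) C) = l :=
  exists_MDS_with_galois_hull_dim_of_euclidean_dual_extended_GRS_general p h e n m k l hp hdvd hquot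
    F hcard a v ha hv hm1 hm2 hdual hk1 hk2 hl
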